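/- Let L ⊆ M_{n,ℓ,t} be a t-spread strongly stable set with ℓ < d. Then for all i, the number of monomials u in Shad_t(L) with max(u) = i equals the number of monomials w ∈ L with max(w) ≤ i - t_ℓ; that is, m_i(Shad_t(L)) = m_{≤ i - t_ℓ}(L). -/

import Mathlib

open Multiset Finset

/-- A monomial in `K[x_1,…,x_n]` is encoded by the multiset of its variable
indices (each index lies in `[1, n]`).  `TSpread n d t u` says that `u` is a
t-spread monomial: its degree is at most `d`, its indices lie in `[1,n]`, and
consecutive indices `j_k ≤ j_{k+1}` of its sorted index list satisfy
`j_{k+1} - j_k ≥ t_k` (here `t 1 = t_1, …, t (d-1) = t_{d-1}`). -/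
def TSpread (n d : ℕ) (t : ℕ → ℕ) (u : Multiset ℕ) : Prop :=
  u.card ≤ d ∧ (∀ i ∈ u, 1 ≤ i ∧ i ≤ n) ∧
    ∀ k : ℕ, k + 1 < u.card →
      (u.sort (· ≤ ·)).getD k 0 + t (k + 1) ≤ (u.sort (· ≤ ·)).getD (k + 1) 0

/-- `Mset n d ℓ t` : the set `M_{n,ℓ,t}` of t-spread monomials of degree `ℓ`. -/
def Mset (n d ℓ : ℕ) (t : ℕ → ℕ) : Set (Multiset ℕ) :=
  {u | TSpread n d t u ∧ u.card = ℓ}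

/-- the t-spread shadow `Shad_t(L) = {x_i w : w ∈ L, x_i w t-spread, i = 1..n}`. -/
def Shad (n d : ℕ) (t : ℕ → ℕ) (L : Set (Multiset ℕ)) : Set (Multiset ℕ) :=
  {v | ∃ w ∈ L, ∃ i, 1 ≤ i ∧ i ≤ n ∧ v = i ::ₘ w ∧ TSpread n d t v}

/-- largest variable index dividing `u` (0 for the constant monomial). -/
def maxVar (u : Multiset ℕ) : ℕ := (u.sort (· ≤ ·)).getLastD 0

/-- `lexGE u v` : `u ≥_lex v` for monomials of equal degree, where the
lexicographic order is induced by `x_1 > x_2 > ⋯ > x_n`. -/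
def lexGE (u v : Multiset ℕ) : Prop :=
  u = v ∨ List.Lex (· < ·) (u.sort (· ≤ ·)) (v.sort (· ≤ ·))

/-- `L` is a t-spread strongly stable set. -/
def StronglyStableSet (n d : ℕ) (t : ℕ → ℕ) (L : Set (Multiset ℕ)) : Prop :=
  ∀ u ∈ L, ∀ i ∈ u, ∀ j : ℕ, 1 ≤ j → j < i →
    TSpread n d t (j ::ₘ u.erase i) → (j ::ₘ u.erase i) ∈ L

/-- `L` is a t-spread lex set (inside `M_{n,ℓ,t}`). -/
def LexSet (n d ℓ : ℕ) (t : ℕ → ℕ) (L : Set (Multiset ℕ)) : Prop :=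
  ∀ u ∈ L, ∀ v ∈ Mset n d ℓ t, lexGE v u → v ∈ L

/-- `m_i(L)` : number of monomials of `L` with largest variable index `i`. -/
noncomputable def mEq (i : ℕ) (L : Set (Multiset ℕ)) : ℕ :=
  {u ∈ L | maxVar u = i}.ncard

/-- `m_{≤ i}(L)` : number of monomials of `L` with largest variable index `≤ i`. -/
noncomputable def mLe (i : ℕ) (L : Set (Multiset ℕ)) : ℕ :=
  {u ∈ L | maxVar u ≤ i}.ncard

/-- `I` is (the set of monomials of) a monomial ideal of `K[x_1,…,x_n]`. -/
def MonIdeal (n : ℕ) (I : Set (Multiset ℕ)) : Prop :=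
  (∀ u ∈ I, ∀ i ∈ u, 1 ≤ i ∧ i ≤ n) ∧
    ∀ u ∈ I, ∀ i : ℕ, 1 ≤ i → i ≤ n → (i ::ₘ u) ∈ I

/-- `I` is generated by t-spread monomials. -/
def TSpreadGen (n d : ℕ) (t : ℕ → ℕ) (I : Set (Multiset ℕ)) : Prop :=
  ∀ u ∈ I, ∃ v ∈ I, TSpread n d t v ∧ v ≤ u

/-- The t-spread operator `a ↦ a^{(n,ℓ,t)}`:  if `a = Σ_{j=p}^{ℓ} C(a_j, j)` is
the Macaulay expansion of `a` with respect to `ℓ`, then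
`tOp t_ℓ ℓ a = Σ_{j=p+1}^{ℓ+1} C(a_{j-1} + 1 - t_ℓ, j)`, computed greedily. -/
noncomputable def tOp (s : ℕ) : ℕ → ℕ → ℕ
  | 0, _ => 0
  | ℓ + 1, a =>
    if a = 0 then 0
    else
      (sSup {b | Nat.choose b (ℓ + 1) ≤ a} + 1 - s).choose (ℓ + 2) +
        tOp s ℓ (a - Nat.choose (sSup {b | Nat.choose b (ℓ + 1) ≤ a}) (ℓ + 1))

/-- The graded Betti number `β_{i,j}(I)` of a t-spread strongly stable ideal,
via the Eliahou–Kervaire-type formula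
`β_{i,i+q}(I) = Σ_{u ∈ G(I)_q} C(max(u) - 1 - Σ_{h=1}^{q-1} t_h, i)`. -/
noncomputable def betti (t : ℕ → ℕ) (I : Set (Multiset ℕ)) (i j : ℕ) : ℕ :=
  ∑ᶠ u ∈ {u ∈ I | u.card = j - i ∧ ∀ v ∈ I, v ≤ u → v = u},
    (maxVar u - 1 - ∑ h ∈ Finset.Icc 1 (j - i - 1), t h).choose i

/-! If `max(u) = i` and `u ∈ Shad_t(L)`, then `u / x_i ∈ L`: writing `u = x_j w` with `w ∈ L`,
either `j = i` and `u / x_i = w`, or `j < i` and `u / x_i = x_j (w / x_i)`, which lies in `L` by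
strong stability. Since `x_i` is the last variable of `u = (u / x_i) x_i`, the t-spread condition
for `u` amounts to that of `u / x_i` together with `max(u / x_i) + t_ℓ ≤ i`. Hence `w ↦ x_i w` is a
bijection from `{w ∈ L : max(w) ≤ i - t_ℓ}` onto `{u ∈ Shad_t(L) : max(u) = i}`. -/

lemma Multiset.sort_cons_of_forall_le {w : Multiset ℕ} {i : ℕ} (h : ∀ j ∈ w, j ≤ i) :
    (i ::ₘ w).sort = w.sort ++ [i] := by
  have hsorted : (w.sort ++ [i]).Pairwise (· ≤ ·) :=
    List.pairwise_append.2 ⟨pairwise_sort w _, List.pairwise_singleton _ _,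
      fun j hj _ hi => (List.mem_singleton.1 hi) ▸ h j ((Multiset.mem_sort _).1 hj)⟩
  have hcoe : ((w.sort ++ [i] : List ℕ) : Multiset ℕ) = i ::ₘ w := by
    rw [← Multiset.coe_add, Multiset.sort_eq, Multiset.coe_singleton, add_comm, singleton_add]
  rw [← hcoe, coe_sort, List.mergeSort_eq_self _ hsorted]

lemma Multiset.sort_ne_nil {u : Multiset ℕ} (hu : u ≠ 0) : u.sort ≠ [] := by
  rw [← List.length_pos_iff, Multiset.length_sort]
  exact Multiset.card_pos.2 hu

lemma le_maxVar {u : Multiset ℕ} {j : ℕ} (hj : j ∈ u) : j ≤ maxVar u := by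
  have hj' : j ∈ u.sort := (Multiset.mem_sort _).2 hj
  have hne : u.sort ≠ [] := List.ne_nil_of_mem hj'
  rw [maxVar, List.getLastD_eq_getLast?, List.getLast?_eq_some_getLast hne]
  exact (pairwise_sort u _).rel_getLast hj'

lemma maxVar_mem {u : Multiset ℕ} (hu : u ≠ 0) : maxVar u ∈ u := by
  rw [maxVar, List.getLastD_eq_getLast?, List.getLast?_eq_some_getLast (Multiset.sort_ne_nil hu),
    Option.getD_some, ← Multiset.mem_sort (r := (· ≤ ·))]
  exact List.getLast_mem _

lemma maxVar_cons_of_forall_le {w : Multiset ℕ} {i : ℕ} (h : ∀ j ∈ w, j ≤ i) :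
    maxVar (i ::ₘ w) = i := by
  rw [maxVar, Multiset.sort_cons_of_forall_le h, List.getLastD_concat]

lemma spread_append_singleton_iff (t : ℕ → ℕ) {l : List ℕ} (hl : l ≠ []) (i : ℕ) :
    (∀ k, k + 1 < l.length + 1 → (l ++ [i]).getD k 0 + t (k + 1) ≤ (l ++ [i]).getD (k + 1) 0) ↔
      (∀ k, k + 1 < l.length → l.getD k 0 + t (k + 1) ≤ l.getD (k + 1) 0) ∧
        l.getLastD 0 + t l.length ≤ i := by
  have hlen : 0 < l.length := List.length_pos_iff.2 hl
  have hlast : l.getLastD 0 = l.getD (l.length - 1) 0 := by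
    rw [List.getLastD_eq_getLast?, List.getLast?_eq_getElem?, List.getD_eq_getElem?_getD]
  have hend : ∀ k, k = l.length - 1 →
      ((l ++ [i]).getD k 0 + t (k + 1) ≤ (l ++ [i]).getD (k + 1) 0 ↔
        l.getLastD 0 + t l.length ≤ i) := by
    rintro k rfl
    rw [List.getD_append _ _ _ _ (by omega), Nat.sub_add_cancel hlen,
      List.getD_append_right _ _ _ _ le_rfl, Nat.sub_self, ← hlast]
    rfl
  constructor
  · intro h
    refine ⟨fun k hk => ?_, (hend _ rfl).1 (h _ (by omega))⟩
    rw [← List.getD_append _ [i] _ _ (by omega), ← List.getD_append _ [i] _ _ hk]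
    exact h k (by omega)
  · rintro ⟨h, hi⟩ k hk
    rcases Nat.lt_or_ge (k + 1) l.length with hk' | hk'
    · rw [List.getD_append _ _ _ _ (by omega), List.getD_append _ _ _ _ hk']
      exact h k hk'
    · exact (hend k (by omega)).2 hi

section

variable {n d : ℕ} {t : ℕ → ℕ}

lemma tSpread_cons_iff {w : Multiset ℕ} {i : ℕ} (hw : w ≠ 0)
    (hwi : ∀ j ∈ w, j ≤ i) :
    TSpread n d t (i ::ₘ w) ↔
      TSpread n d t w ∧ w.card < d ∧ (1 ≤ i ∧ i ≤ n) ∧ maxVar w + t w.card ≤ i := by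
  unfold TSpread
  rw [Multiset.sort_cons_of_forall_le hwi, Multiset.card_cons,
    ← Multiset.length_sort (r := (· ≤ ·)) (s := w),
    spread_append_singleton_iff t (Multiset.sort_ne_nil hw), Multiset.forall_mem_cons, maxVar,
    Multiset.length_sort]
  constructor
  · rintro ⟨hd, ⟨hi, hrange⟩, hspread, hgap⟩
    exact ⟨⟨by omega, hrange, hspread⟩, by omega, hi, hgap⟩
  · rintro ⟨⟨_, hrange, hspread⟩, hd, hi, hgap⟩
    exact ⟨by omega, ⟨hi, hrange⟩, hspread, hgap⟩

lemma StronglyStableSet.cons_erase_mem {L : Set (Multiset ℕ)} (hss : StronglyStableSet n d t L)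
    {w : Multiset ℕ} (hw : w ∈ L) {i j : ℕ} (hj : 1 ≤ j) (hji : j ≤ i)
    (hi : i ∈ j ::ₘ w) (hT : TSpread n d t ((j ::ₘ w).erase i)) :
    (j ::ₘ w).erase i ∈ L := by
  rcases hji.eq_or_lt with rfl | hlt
  · rwa [Multiset.erase_cons_head]
  · rw [Multiset.erase_cons_tail _ hlt.ne] at hT ⊢
    exact hss w hw i ((Multiset.mem_cons.1 hi).resolve_left hlt.ne') j hj hlt hT

lemma shad_filter_maxVar_eq_image {ℓ : ℕ} {L : Set (Multiset ℕ)}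
    (hℓ1 : 1 ≤ ℓ) (hℓ : ℓ < d) (hLM : L ⊆ Mset n d ℓ t) (hss : StronglyStableSet n d t L)
    {i : ℕ} (hin : i ≤ n) :
    {u ∈ Shad n d t L | maxVar u = i} = (i ::ₘ ·) '' {w ∈ L | maxVar w ≤ i - t ℓ} := by
  ext u
  constructor
  · rintro ⟨⟨w, hwL, j, hj, -, rfl, hT⟩, hmax⟩
    set v := (j ::ₘ w).erase i
    have hiu : i ∈ j ::ₘ w := hmax ▸ maxVar_mem Multiset.cons_ne_zero
    have hu : i ::ₘ v = j ::ₘ w := Multiset.cons_erase hiu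
    have hvi : ∀ k ∈ v, k ≤ i := fun k hk => hmax ▸ le_maxVar (Multiset.mem_of_mem_erase hk)
    have hcard : v.card = ℓ := by
      rw [Multiset.card_erase_of_mem hiu, Multiset.card_cons, (hLM hwL).2, Nat.pred_succ]
    have hv0 : v ≠ 0 := Multiset.card_pos.1 (by omega)
    rw [← hu, tSpread_cons_iff hv0 hvi, hcard] at hT
    obtain ⟨hTv, -, -, hgap⟩ := hT
    exact ⟨v, ⟨hss.cons_erase_mem hwL hj (hmax ▸ le_maxVar (Multiset.mem_cons_self _ _)) hiu hTv,
      by omega⟩, hu⟩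
  · rintro ⟨w, ⟨hwL, hmax⟩, rfl⟩
    obtain ⟨hTw, hcard⟩ := hLM hwL
    have hw0 : w ≠ 0 := Multiset.card_pos.1 (by omega)
    have hm1 : 1 ≤ maxVar w := (hTw.2.1 _ (maxVar_mem hw0)).1
    have hwi : ∀ j ∈ w, j ≤ i := fun j hj => (le_maxVar hj).trans (by omega)
    have hT : TSpread n d t (i ::ₘ w) :=
      (tSpread_cons_iff hw0 hwi).2 ⟨hTw, by omega, ⟨by omega, hin⟩, by rw [hcard]; omega⟩
    exact ⟨⟨w, hwL, i, by omega, hin, rfl, hT⟩, maxVar_cons_of_forall_le hwi⟩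

end

theorem stmt4_general (n d ℓ : ℕ) (t : ℕ → ℕ) (hℓ1 : 1 ≤ ℓ) (hℓ : ℓ < d)
    (L : Set (Multiset ℕ)) (hLM : L ⊆ Mset n d ℓ t)
    (hss : StronglyStableSet n d t L) :
    ∀ i ≤ n, mEq i (Shad n d t L) = mLe (i - t ℓ) L := by
  intro i hin
  rw [mEq, mLe, shad_filter_maxVar_eq_image hℓ1 hℓ hLM hss hin,
    Set.ncard_image_of_injective _ fun _ _ => (Multiset.cons_inj_right i).1]

/-- for a t-spread strongly stable set `L ⊆ M_{n,ℓ,t}` with `ℓ < d`,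
`m_i(Shad_t(L)) = m_{≤ i - t_ℓ}(L)` for all `i`. -/
theorem stmt4 (n d ℓ : ℕ) (t : ℕ → ℕ) (hd : 2 ≤ d) (hℓ1 : 1 ≤ ℓ) (hℓ : ℓ < d)
    (L : Set (Multiset ℕ)) (hLM : L ⊆ Mset n d ℓ t)
    (hss : StronglyStableSet n d t L) :
    ∀ i ≤ n, mEq i (Shad n d t L) = mLe (i - t ℓ) L :=
  stmt4_general n d ℓ t hℓ1 hℓ L hLM hss
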